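/- arXiv:1304.3906 — 5 statements merged into one kernel-verified Lean document; each statement's English description precedes it below -/
import Mathlib

section
/- Let I be a stable monomial ideal of k[x₁,…,xₙ], let m be a monomial in I, and let m₀ ∈ G(I) be a divisor of m satisfying max(m₀) ≤ min(m/m₀). Then m₀ is the greatest element, with respect to the lexicographic order ≺, among all elements of G(I) that divide m. -/
/-!
Suppose `m' ∈ G(I)` divides `m` and `m₀ ≺ m'`, first differing at index `i`. Below `max(m₀)`
the monomials `m` and `m₀` agree, because `min(m/m₀) ≥ max(m₀)`; so `i < max(m₀)` would give
`m' i > m₀ i = m i`. Hence `i ≥ max(m₀)`, which makes `m₀` divide `m'`, and minimality of `m'`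
forces `m' = m₀`.
-/

namespace Paper

/-- A monomial of `k[x₁,…,xₙ]`, identified with its exponent vector. -/
abbrev Mon : Type := ℕ → ℕ

/-- The variable `x_k` as a monomial. -/
def e (k : ℕ) : Mon := fun i => if i = k then 1 else 0

/-- The power `x_k^l` as a monomial. -/
def xpw (k l : ℕ) : Mon := fun i => if i = k then l else 0

/-- The support of a monomial. -/
def msupp (m : Mon) : Set ℕ := {i | m i ≠ 0}

/-- `max(m)`, the largest index of a variable dividing `m`. -/
noncomputable def mmax (m : Mon) : ℕ := sSup (msupp m)

/-- `min(m)`, the smallest index of a variable dividing `m`. -/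
noncomputable def mmin (m : Mon) : ℕ := sInf (msupp m)

/-- A monomial uses only variables `x₁,…,xₙ`. -/
def inVars (n : ℕ) (m : Mon) : Prop := ∀ i, m i ≠ 0 → 1 ≤ i ∧ i ≤ n

/-- A monomial ideal of `k[x₁,…,xₙ]`, identified with its set of monomials, which is
closed under multiplication by arbitrary monomials. -/
structure MonIdeal (n : ℕ) where
  carrier : Set Mon
  vars_mem : ∀ m ∈ carrier, inVars n m
  mul_mem : ∀ m ∈ carrier, ∀ a : Mon, inVars n a → m + a ∈ carrier

/-- `G(I)`: the set of monomials of `I` minimal under divisibility. -/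
def minGens {n : ℕ} (I : MonIdeal n) : Set Mon :=
  {m | m ∈ I.carrier ∧ ∀ m' ∈ I.carrier, m' ≤ m → m' = m}

/-- `I` is stable: for every monomial `m ∈ I` and `1 ≤ i < max(m)`,
`x_i·(m/x_{max(m)}) ∈ I`. -/
def Stable {n : ℕ} (I : MonIdeal n) : Prop :=
  ∀ m ∈ I.carrier, ∀ i : ℕ, 1 ≤ i → i < mmax m → (m - e (mmax m)) + e i ∈ I.carrier

/-- `I` is Borel fixed: for every monomial `m ∈ I` and `1 ≤ i < j` with `x_j ∣ m`,
`x_i·(m/x_j) ∈ I`. -/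
def Borel {n : ℕ} (I : MonIdeal n) : Prop :=
  ∀ m ∈ I.carrier, ∀ i j : ℕ, 1 ≤ i → i < j → m j ≠ 0 → (m - e j) + e i ∈ I.carrier

/-- The lexicographic order `m ≺ m'` on monomials with `x₁ ≻ x₂ ≻ ⋯`. -/
def mlt (m m' : Mon) : Prop := ∃ i : ℕ, (∀ j, j < i → m j = m' j) ∧ m i < m' i

/-- `g` is the Eliahou–Kervaire decomposition function of `I`: for every monomial `m ∈ I`,
`g m ∈ G(I)`, `g m` divides `m`, and `max(g m) ≤ min(m / g m)`. -/
def IsDecompFn {n : ℕ} (I : MonIdeal n) (g : Mon → Mon) : Prop :=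
  ∀ m ∈ I.carrier, g m ∈ minGens I ∧ g m ≤ m ∧ mmax (g m) ≤ mmin (m - g m)

/-- `max { max(m) : m ∈ G(I) }`. -/
noncomputable def hMax {n : ℕ} (I : MonIdeal n) : ℕ :=
  sSup {j | ∃ m ∈ minGens I, mmax m = j}

theorem mlt_or_mlt_of_ne {m m' : Mon} (h : m ≠ m') : mlt m m' ∨ mlt m' m :=
  lt_or_gt_of_ne (toLex_inj.not.mpr h)

theorem eq_zero_of_lt_mmin {m : Mon} {i : ℕ} (h : i < mmin m) : m i = 0 :=
  not_not.mp (Nat.notMem_of_lt_sInf h)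

theorem le_mmax_of_ne_zero {n : ℕ} {m : Mon} (hm : inVars n m) {j : ℕ} (hj : m j ≠ 0) :
    j ≤ mmax m :=
  le_csSup ⟨n, fun k hk => (hm k hk).2⟩ hj

theorem le_of_mlt_of_mmax_le_mmin {n : ℕ} {m m₀ m' : Mon} (hvars : inVars n m₀)
    (hdvd : m₀ ≤ m) (hsplit : mmax m₀ ≤ mmin (m - m₀)) (hle : m' ≤ m) (hlt : mlt m₀ m') :
    m₀ ≤ m' := by
  obtain ⟨i, hbelow, hi⟩ := hlt
  have hmax_le : mmax m₀ ≤ i := by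
    by_contra! hlt_max
    have hquot : m i - m₀ i = 0 := eq_zero_of_lt_mmin (m := m - m₀) (hlt_max.trans_le hsplit)
    have hm₀_le : m₀ i ≤ m i := hdvd i
    have hm'_le : m' i ≤ m i := hle i
    omega
  intro j
  rcases lt_trichotomy j i with hj | rfl | hj
  · exact (hbelow j hj).le
  · exact hi.le
  · have hzero : m₀ j = 0 := by
      by_contra h0
      exact (le_mmax_of_ne_zero hvars h0).not_gt (hmax_le.trans_lt hj)
    exact hzero ▸ Nat.zero_le _

theorem statement0_general {n : ℕ} (I : MonIdeal n)
    (m : Mon)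
    (m₀ : Mon) (hm₀ : m₀ ∈ minGens I) (hdvd : m₀ ≤ m)
    (hsplit : mmax m₀ ≤ mmin (m - m₀)) :
    ∀ m' ∈ minGens I, m' ≤ m → m' = m₀ ∨ mlt m' m₀ := by
  intro m' hm' hle
  by_cases hEq : m' = m₀
  · exact Or.inl hEq
  rcases mlt_or_mlt_of_ne hEq with hlt | hgt
  · exact Or.inr hlt
  have hdvd' : m₀ ≤ m' :=
    le_of_mlt_of_mmax_le_mmin (I.vars_mem m₀ hm₀.1) hdvd hsplit hle hgt
  exact Or.inl (hm'.2 m₀ hm₀.1 hdvd').symm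

/-- For a stable monomial ideal `I`, a monomial `m ∈ I`, and a divisor
`m₀ ∈ G(I)` of `m` with `max(m₀) ≤ min(m/m₀)`, the monomial `m₀` is the greatest element,
with respect to the lexicographic order `≺`, among the elements of `G(I)` dividing `m`. -/
theorem statement0 {n : ℕ} (I : MonIdeal n) (hI : Stable I)
    (m : Mon) (hm : m ∈ I.carrier)
    (m₀ : Mon) (hm₀ : m₀ ∈ minGens I) (hdvd : m₀ ≤ m)
    (hsplit : mmax m₀ ≤ mmin (m - m₀)) :
    ∀ m' ∈ minGens I, m' ≤ m → m' = m₀ ∨ mlt m' m₀ :=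
  statement0_general I m m₀ hm₀ hdvd hsplit

end Paper
end

section
/- Let Δ be a simplicial complex and v a vertex not in the vertex set of Δ. If the join Δ∗⟨v⟩ is constructible, then Δ itself is constructible. -/
/-!
The link of `v` in `Δ ∗ ⟨v⟩` is `Δ` itself, and the link of a vertex of a constructible
complex of dimension `d` is constructible of dimension `d - 1`: taking links commutes with
unions and intersections, and the link of a vertex in a simplex is the opposite face.
-/

namespace Paper

/-- Constructible simplicial complexes (of a given dimension `d`, possibly `-1`):
every simplex is constructible, and the union of two constructible `d`-dimensional
complexes whose intersection is constructible of dimension `d-1` is constructible. -/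
inductive Constructible {V : Type*} : Set (Finset V) → ℤ → Prop
  | simplex (σ : Finset V) : Constructible {τ | τ ⊆ σ} ((σ.card : ℤ) - 1)
  | union {Δ₁ Δ₂ : Set (Finset V)} {d : ℤ} :
      Constructible Δ₁ d → Constructible Δ₂ d → Constructible (Δ₁ ∩ Δ₂) (d - 1) →
      Constructible (Δ₁ ∪ Δ₂) d

/-- An (abstract) simplicial complex: a collection of finite sets closed under
taking subsets. -/
def IsSimplicialComplex {V : Type*} (Δ : Set (Finset V)) : Prop :=
  ∀ σ ∈ Δ, ∀ τ, τ ⊆ σ → τ ∈ Δ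

/-- The join `Δ ∗ ⟨v⟩` of a simplicial complex `Δ` with a new vertex `v`. -/
def joinVertex {V : Type*} [DecidableEq V] (Δ : Set (Finset V)) (v : V) : Set (Finset V) :=
  Δ ∪ {τ | ∃ σ ∈ Δ, τ = insert v σ}

def link {V : Type*} [DecidableEq V] (C : Set (Finset V)) (v : V) : Set (Finset V) :=
  {σ | v ∉ σ ∧ insert v σ ∈ C}

section

variable {V : Type*} {C : Set (Finset V)} {d : ℤ}

lemma Constructible.empty_mem (h : Constructible C d) : (∅ : Finset V) ∈ C := by
  induction h with
  | simplex σ => exact Finset.empty_subset σ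
  | union _ _ _ ih₁ _ _ => exact Or.inl ih₁

lemma Constructible.isSimplicialComplex (h : Constructible C d) : IsSimplicialComplex C := by
  induction h with
  | simplex σ => exact fun ρ hρ τ hτ => hτ.trans hρ
  | union _ _ _ ih₁ ih₂ _ =>
    rintro ρ (hρ | hρ) τ hτ
    · exact Or.inl (ih₁ ρ hρ τ hτ)
    · exact Or.inr (ih₂ ρ hρ τ hτ)

variable [DecidableEq V] {v : V}

lemma link_union (C₁ C₂ : Set (Finset V)) (v : V) :
    link (C₁ ∪ C₂) v = link C₁ v ∪ link C₂ v := by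
  ext σ
  simp only [link, Set.mem_ofPred_eq, Set.mem_union]
  tauto

lemma link_inter (C₁ C₂ : Set (Finset V)) (v : V) :
    link (C₁ ∩ C₂) v = link C₁ v ∩ link C₂ v := by
  ext σ
  simp only [link, Set.mem_ofPred_eq, Set.mem_inter_iff]
  tauto

lemma link_eq_empty (hC : IsSimplicialComplex C) (hv : {v} ∉ C) : link C v = ∅ :=
  Set.eq_empty_of_forall_notMem fun σ hσ =>
    hv (hC _ hσ.2 {v} (Finset.singleton_subset_iff.2 (Finset.mem_insert_self v σ)))

lemma link_simplex {σ : Finset V} (hv : v ∈ σ) :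
    link {τ | τ ⊆ σ} v = {τ | τ ⊆ σ.erase v} := by
  ext τ
  simp only [link, Set.mem_ofPred_eq, Finset.insert_subset_iff, Finset.subset_erase]
  tauto

lemma Constructible.link (h : Constructible C d) (hv : {v} ∈ C) :
    Constructible (link C v) (d - 1) := by
  induction h with
  | simplex σ =>
    have hvσ : v ∈ σ := Finset.singleton_subset_iff.1 hv
    have hcard : ((σ.erase v).card : ℤ) - 1 = (σ.card : ℤ) - 1 - 1 := by
      rw [Finset.card_erase_of_mem hvσ, Nat.cast_sub (Finset.card_pos.2 ⟨v, hvσ⟩)]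
      ring
    rw [link_simplex hvσ, ← hcard]
    exact Constructible.simplex _
  | @union C₁ C₂ d h₁ h₂ _ ih₁ ih₂ ih₃ =>
    rw [link_union]
    by_cases hv₁ : {v} ∈ C₁ <;> by_cases hv₂ : {v} ∈ C₂
    · exact .union (ih₁ hv₁) (ih₂ hv₂) (link_inter C₁ C₂ v ▸ ih₃ ⟨hv₁, hv₂⟩)
    · rw [link_eq_empty h₂.isSimplicialComplex hv₂, Set.union_empty]
      exact ih₁ hv₁
    · rw [link_eq_empty h₁.isSimplicialComplex hv₁, Set.empty_union]
      exact ih₂ (hv.resolve_left hv₁)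
    · exact absurd hv (by simp [hv₁, hv₂])

lemma link_joinVertex {Δ : Set (Finset V)} (hv : ∀ σ ∈ Δ, v ∉ σ) :
    link (joinVertex Δ v) v = Δ := by
  ext σ
  constructor
  · rintro ⟨hvσ, hσ | ⟨ρ, hρ, hσρ⟩⟩
    · exact absurd (Finset.mem_insert_self v σ) (hv _ hσ)
    · rwa [← Finset.erase_insert hvσ, hσρ, Finset.erase_insert (hv ρ hρ)]
  · exact fun hσ => ⟨hv σ hσ, Or.inr ⟨σ, hσ, rfl⟩⟩

end

theorem statement1_general {V : Type*} [DecidableEq V] (Δ : Set (Finset V))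
    (v : V) (hv : ∀ σ ∈ Δ, v ∉ σ)
    (hjoin : ∃ d : ℤ, Constructible (joinVertex Δ v) d) :
    ∃ d : ℤ, Constructible Δ d := by
  obtain ⟨d, hd⟩ := hjoin
  have hempty : (∅ : Finset V) ∈ Δ := by
    rcases hd.empty_mem with h | ⟨ρ, -, h⟩
    · exact h
    · exact absurd h.symm (Finset.insert_ne_empty v ρ)
  have hsingleton : {v} ∈ joinVertex Δ v := Or.inr ⟨∅, hempty, rfl⟩
  exact ⟨d - 1, link_joinVertex hv ▸ hd.link hsingleton⟩

/-- If `Δ` is a simplicial complex and `v` a vertex not in the vertex set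
of `Δ` such that the join `Δ ∗ ⟨v⟩` is constructible, then `Δ` itself is constructible. -/
theorem statement1 {V : Type*} [DecidableEq V] (Δ : Set (Finset V))
    (hΔ : IsSimplicialComplex Δ) (v : V) (hv : ∀ σ ∈ Δ, v ∉ σ)
    (hjoin : ∃ d : ℤ, Constructible (joinVertex Δ v) d) :
    ∃ d : ℤ, Constructible Δ d :=
  statement1_general Δ v hv hjoin

end Paper
end

section
/- Let k be a field, S = k[x₁,…,xₙ], and let I ⊆ S be the ideal spanned by the monomials of a stable monomial ideal, and let 1 ≤ h ≤ n. If the set of associated primes of the S-module S/I is exactly {(x₁,…,x_h)} (for a stable ideal this holds precisely when S/I is Cohen–Macaulay of codimension h), then h = max{max(m) : m ∈ G(I)}, and there exists a unique positive integer l such that x_h^l ∈ G(I). -/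
/-! Take a minimal generator `m₀` of the stable ideal `I` whose `max` is largest, say `j`, and
`w = m₀ / x_j`. Stability puts `x_i w` in `I` for every `i ≤ j`. Conversely, if `f ∉ (x₁,…,x_j)`,
some monomial `d` of `f` is free of `x₁,…,x_j`; a generator of `I` dividing `d w` involves only
`x₁,…,x_j`, so it would divide `w`, which lies strictly below `m₀`. Hence `(x₁,…,x_j)` is the
annihilator of `w` in `S/I`, and it must be the only associated prime `(x₁,…,x_h)`: `j = h`.
Since `x_h` lies in every minimal prime of `I` (all of them are associated), some power of `x_h`
lies in `I`, and the least one is the unique pure power of `x_h` in `G(I)`. -/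

open MvPolynomial

namespace MvPolynomial

variable {σ R : Type*} [CommRing R]

noncomputable def killVars (A : Set σ) : MvPolynomial σ R →ₐ[R] MvPolynomial σ R :=
  aeval (Aᶜ.indicator X)

lemma sub_killVars_mem_span_X_image (A : Set σ) (f : MvPolynomial σ R) :
    f - killVars A f ∈ Ideal.span (X '' A) := by
  induction f using MvPolynomial.induction_on with
  | C r => simp [killVars]
  | add p q hp hq =>
    rw [map_add, add_sub_add_comm]
    exact Ideal.add_mem _ hp hq
  | mul_X p i hp =>
    rw [map_mul, killVars, aeval_X]
    by_cases hi : i ∈ A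
    · rw [Set.indicator_of_notMem (Set.notMem_compl_iff.mpr hi), mul_zero, sub_zero]
      exact Ideal.mul_mem_left _ p (Ideal.subset_span ⟨i, hi, rfl⟩)
    · rw [Set.indicator_of_mem (Set.mem_compl hi), ← sub_mul]
      exact Ideal.mul_mem_right _ _ hp

lemma ker_killVars (A : Set σ) :
    RingHom.ker (killVars A : MvPolynomial σ R →ₐ[R] MvPolynomial σ R) = Ideal.span (X '' A) := by
  refine le_antisymm (fun f hf => ?_) ?_
  · simpa [(RingHom.mem_ker).mp hf] using sub_killVars_mem_span_X_image A f
  · rw [Ideal.span_le]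
    rintro _ ⟨i, hi, rfl⟩
    simp [killVars, Set.indicator_of_notMem (Set.notMem_compl_iff.mpr hi)]

theorem isPrime_span_X_image [IsDomain R] (A : Set σ) :
    (Ideal.span (X '' A : Set (MvPolynomial σ R))).IsPrime :=
  ker_killVars (R := R) A ▸ RingHom.ker_isPrime _

theorem X_mem_span_X_image_iff [Nontrivial R] {A : Set σ} {i : σ} :
    (X i : MvPolynomial σ R) ∈ Ideal.span (X '' A) ↔ i ∈ A := by
  classical
  simp [mem_ideal_span_X_image, support_X, Finsupp.single_apply]

theorem span_X_image_eq_colon_monomial {E : Set (σ →₀ ℕ)} {A : Set σ} {w : σ →₀ ℕ}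
    (hA : ∀ i ∈ A, ∃ s ∈ E, s ≤ w + Finsupp.single i 1)
    (hout : ∀ d : σ →₀ ℕ, (∀ i ∈ A, d i = 0) → ∀ s ∈ E, ¬ s ≤ d + w) :
    Ideal.span (X '' A) =
      (Ideal.span ((fun s => monomial s (1 : R)) '' E)).colon {monomial w 1} := by
  classical
  refine le_antisymm ?_ fun f hf => ?_
  · rw [Ideal.span_le]
    rintro _ ⟨i, hi, rfl⟩
    rw [SetLike.mem_coe, Submodule.mem_colon_singleton, smul_eq_mul, X, monomial_mul, one_mul,
      mem_ideal_span_monomial_image]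
    intro d hd
    obtain rfl := Finset.mem_singleton.mp (support_monomial_subset hd)
    rw [add_comm]
    exact hA i hi
  · rw [Submodule.mem_colon_singleton, smul_eq_mul, mem_ideal_span_monomial_image] at hf
    by_contra hfA
    obtain ⟨d, hd, hdA⟩ : ∃ d ∈ f.support, ∀ i ∈ A, d i = 0 := by
      simpa [mem_ideal_span_X_image] using hfA
    have hdw : d + w ∈ (f * monomial w 1).support := by
      rw [mem_support_iff, coeff_mul_monomial', if_pos le_add_self, add_tsub_cancel_right,
        mul_one]
      exact mem_support_iff.mp hd
    obtain ⟨s, hs, hsle⟩ := hf _ hdw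
    exact hout d hdA s hs hsle

end MvPolynomial

theorem isAssociatedPrime_colon_singleton {R : Type*} [CommRing R] {J : Ideal R} {w : R}
    (h : (J.colon {w}).IsPrime) : IsAssociatedPrime (J.colon {w}) (R ⧸ J) := by
  refine ⟨h, Ideal.Quotient.mk J w, ?_⟩
  convert h.radical.symm using 2
  ext r
  rw [Submodule.mem_colon_singleton, Algebra.smul_def, Ideal.Quotient.algebraMap_eq, ← map_mul,
    Submodule.mem_bot, Ideal.Quotient.eq_zero_iff_mem, Submodule.mem_colon_singleton, smul_eq_mul]

theorem exists_pow_mem_of_associatedPrimes_eq_singleton {R : Type*} [CommRing R]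
    [IsNoetherianRing R] {J P : Ideal R} (h : associatedPrimes R (R ⧸ J) = {P}) {x : R}
    (hx : x ∈ P) : ∃ N, x ^ N ∈ J := by
  have hmin : J.minimalPrimes ⊆ {P} :=
    calc J.minimalPrimes = (Module.annihilator R (R ⧸ J)).minimalPrimes := by
          rw [Ideal.annihilator_quotient]
      _ ⊆ associatedPrimes R (R ⧸ J) :=
          Module.associatedPrimes.minimalPrimes_annihilator_subset_associatedPrimes R (R ⧸ J)
      _ = {P} := h
  show x ∈ J.radical
  rw [← Ideal.sInf_minimalPrimes]
  exact Submodule.mem_sInf.mpr fun q hq => (hmin hq : q = P) ▸ hx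

namespace Paper

variable {n : ℕ}

lemma le_mmax {m : Mon} (hm : inVars n m) {i : ℕ} (hi : m i ≠ 0) : i ≤ mmax m :=
  le_csSup ⟨n, fun k hk => (hm k hk).2⟩ hi

lemma mmax_le {m : Mon} (hm : inVars n m) : mmax m ≤ n :=
  csSup_le' fun k hk => (hm k hk).2

lemma mmax_ne_zero {m : Mon} (hm : inVars n m) (h0 : m ≠ 0) : m (mmax m) ≠ 0 :=
  Nat.sSup_mem (Function.ne_iff.mp h0) ⟨n, fun k hk => (hm k hk).2⟩

lemma xpw_le_xpw_iff {k l l' : ℕ} : xpw k l ≤ xpw k l' ↔ l ≤ l' := by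
  refine ⟨fun h => by simpa [xpw] using h k, fun h i => ?_⟩
  simp only [xpw]
  split <;> omega

lemma eq_xpw_of_le_xpw {m : Mon} {k l : ℕ} (h : m ≤ xpw k l) : m = xpw k (m k) := by
  funext i
  by_cases hi : i = k
  · simp [xpw, hi]
  · simpa [xpw, hi] using h i

-- The paper's variable `x_{i+1}` is `X i` for `i : Fin n`.
noncomputable def finExp (n : ℕ) (m : Mon) : Fin n →₀ ℕ :=
  Finsupp.equivFunOnFinite.symm fun i => m (i + 1)

@[simp] lemma finExp_apply (m : Mon) (i : Fin n) : finExp n m i = m (i + 1) := rfl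

lemma finExp_le_finExp_iff {m a : Mon} (hm : inVars n m) :
    finExp n m ≤ finExp n a ↔ m ≤ a := by
  refine ⟨fun h i => ?_, fun h i => h (i + 1)⟩
  by_cases hi : m i = 0
  · simp [hi]
  · obtain ⟨h1, h2⟩ := hm i hi
    simpa [Nat.sub_add_cancel h1] using h ⟨i - 1, by omega⟩

@[simp] lemma finExp_zero : finExp n 0 = 0 := by
  ext; rfl

lemma finExp_add (m a : Mon) : finExp n (m + a) = finExp n m + finExp n a := by
  ext; rfl

lemma finExp_xpw (i : Fin n) (l : ℕ) : finExp n (xpw (i + 1) l) = Finsupp.single i l := by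
  ext j
  simp [xpw, Finsupp.single_apply, Fin.ext_iff, eq_comm]

lemma finExp_e (i : Fin n) : finExp n (e (i + 1)) = Finsupp.single i 1 := by
  ext j
  simp [e, Finsupp.single_apply, Fin.ext_iff, eq_comm]

lemma inVars_xpw (i : Fin n) (l : ℕ) : inVars n (xpw (i + 1) l) := fun k hk => by
  simp only [xpw, ne_eq, ite_eq_right_iff, Classical.not_imp] at hk
  omega

lemma le_of_span_X_setOf_le {K : Type*} [Field K] {j k : ℕ} (hj : j ≤ n)
    (h : Ideal.span (X '' {i : Fin n | (i : ℕ) + 1 ≤ j} : Set (MvPolynomial (Fin n) K)) ≤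
      Ideal.span (X '' {i : Fin n | (i : ℕ) + 1 ≤ k})) : j ≤ k := by
  rcases Nat.eq_zero_or_pos j with rfl | hj0
  · exact Nat.zero_le k
  · have hX : (X ⟨j - 1, by omega⟩ : MvPolynomial (Fin n) K) ∈
        Ideal.span (X '' {i : Fin n | (i : ℕ) + 1 ≤ k}) :=
      h (X_mem_span_X_image_iff.mpr (show j - 1 + 1 ≤ j by omega))
    have hmem : (⟨j - 1, _⟩ : Fin n) ∈ {i : Fin n | (i : ℕ) + 1 ≤ k} :=
      X_mem_span_X_image_iff.mp hX
    exact (Nat.sub_add_cancel hj0).ge.trans hmem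

lemma prod_X_pow_eq_monomial_finExp {K : Type*} [Field K] (m : Mon) :
    ∏ i : Fin n, (X i : MvPolynomial (Fin n) K) ^ m (i + 1) = monomial (finExp n m) 1 := by
  rw [← prod_X_pow_eq_monomial]
  refine (Finset.prod_subset (Finset.subset_univ _) fun i _ hi => ?_).symm
  rw [show m (i + 1) = 0 from Finsupp.notMem_support_iff.mp hi, pow_zero]

lemma Stable.sub_add_mem {I : MonIdeal n} (hI : Stable I) {m : Mon} (hm : m ∈ I.carrier)
    (hm0 : m ≠ 0) {i : ℕ} (hi1 : 1 ≤ i) (hij : i ≤ mmax m) :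
    (m - e (mmax m)) + e i ∈ I.carrier := by
  rcases hij.lt_or_eq with hij | rfl
  · exact hI m hm i hi1 hij
  · convert hm using 1
    funext k
    have := mmax_ne_zero (I.vars_mem m hm) hm0
    by_cases hk : k = mmax m <;> simp [e, hk]; omega

namespace MonIdeal

variable (I : MonIdeal n)

lemma mem_of_le {m a : Mon} (hm : m ∈ I.carrier) (hle : m ≤ a) (ha : inVars n a) :
    a ∈ I.carrier := by
  have hsub : inVars n (a - m) := fun i hi => ha i (by simp at hi; omega)
  simpa [add_tsub_cancel_of_le hle] using I.mul_mem m hm (a - m) hsub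

lemma exists_minGens_le {m : Mon} (hm : m ∈ I.carrier) : ∃ u ∈ minGens I, u ≤ m := by
  obtain ⟨u, ⟨hu, hum⟩, hmin⟩ := (InvImage.wf (finExp n) wellFounded_lt).has_min
    {u | u ∈ I.carrier ∧ u ≤ m} ⟨m, hm, le_rfl⟩
  refine ⟨u, ⟨hu, fun u' hu' hle => by_contra fun hne => hmin u' ⟨hu', hle.trans hum⟩ ?_⟩, hum⟩
  refine lt_of_le_of_ne ((finExp_le_finExp_iff (I.vars_mem u' hu')).mpr hle) fun h => hne ?_
  exact le_antisymm hle ((finExp_le_finExp_iff (I.vars_mem u hu)).mp h.ge)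

lemma exists_minGens_mmax_eq_hMax (hne : (minGens I).Nonempty) :
    ∃ m0 ∈ minGens I, mmax m0 = hMax I ∧ ∀ u ∈ minGens I, mmax u ≤ hMax I := by
  set S := {j | ∃ m ∈ minGens I, mmax m = j}
  have hbdd : BddAbove S := by
    refine ⟨n, ?_⟩
    rintro _ ⟨m, hm, rfl⟩
    exact mmax_le (I.vars_mem m hm.1)
  obtain ⟨m0, hm0⟩ := hne
  obtain ⟨m0, hm0, hmax⟩ := Nat.sSup_mem (s := S) ⟨_, m0, hm0, rfl⟩ hbdd
  exact ⟨m0, hm0, hmax, fun u hu => le_csSup hbdd ⟨u, hu, rfl⟩⟩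

lemma existsUnique_xpw_mem_minGens {k N : ℕ} (h0 : (0 : Mon) ∉ I.carrier)
    (hN : xpw k N ∈ I.carrier) : ∃! l : ℕ, 0 < l ∧ xpw k l ∈ minGens I := by
  classical
  have hex : ∃ l, xpw k l ∈ I.carrier := ⟨N, hN⟩
  have hpos : 0 < Nat.find hex := by
    refine Nat.pos_of_ne_zero fun hl => h0 ?_
    convert Nat.find_spec hex
    funext i
    simp [xpw, hl]
  have hmin : xpw k (Nat.find hex) ∈ minGens I := by
    refine ⟨Nat.find_spec hex, fun m hm hle => ?_⟩
    rw [eq_xpw_of_le_xpw hle] at hm ⊢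
    exact le_antisymm (xpw_le_xpw_iff.mpr (by simpa [xpw] using hle k))
      (xpw_le_xpw_iff.mpr (Nat.find_min' hex hm))
  refine ⟨Nat.find hex, ⟨hpos, hmin⟩, fun l ⟨_, hl⟩ => ?_⟩
  rcases le_total l (Nat.find hex) with hle | hle
  · simpa [xpw] using congrFun (hmin.2 _ hl.1 (xpw_le_xpw_iff.mpr hle)) k
  · simpa [xpw] using (congrFun (hl.2 _ hmin.1 (xpw_le_xpw_iff.mpr hle)) k).symm

lemma notMem_of_lt_of_mem_minGens {m a : Mon} (hm : m ∈ minGens I) (ha : a < m) :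
    a ∉ I.carrier :=
  fun h => ha.ne (hm.2 a h ha.le)

section Polynomial

variable (K : Type*) [Field K]

noncomputable def toIdeal : Ideal (MvPolynomial (Fin n) K) :=
  Ideal.span ((fun s => monomial s 1) '' (finExp n '' I.carrier))

lemma span_prod_X_pow_eq_toIdeal :
    Ideal.span {f | ∃ m ∈ I.carrier, f = ∏ i : Fin n, (X i : MvPolynomial (Fin n) K) ^ m (i + 1)}
      = I.toIdeal K := by
  rw [toIdeal, Set.image_image]
  congr 1
  ext f
  simp [prod_X_pow_eq_monomial_finExp, eq_comm]

variable {K}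

lemma monomial_mem_toIdeal_iff {a : Mon} (ha : inVars n a) :
    monomial (finExp n a) (1 : K) ∈ I.toIdeal K ↔ a ∈ I.carrier := by
  classical
  rw [toIdeal, mem_ideal_span_monomial_image, support_monomial, if_neg one_ne_zero]
  simp only [Finset.mem_singleton, forall_eq, Set.exists_mem_image]
  exact ⟨fun ⟨m, hm, hle⟩ => I.mem_of_le hm ((finExp_le_finExp_iff (I.vars_mem m hm)).mp hle) ha,
    fun h => ⟨a, h, le_rfl⟩⟩

lemma zero_notMem_of_toIdeal_ne_top (h : I.toIdeal K ≠ ⊤) : (0 : Mon) ∉ I.carrier := by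
  intro h0
  refine h ((Ideal.eq_top_iff_one _).mpr ?_)
  have h1 := (I.monomial_mem_toIdeal_iff (K := K) (a := 0) (fun _ hi => absurd rfl hi)).mpr h0
  rwa [finExp_zero, monomial_zero', C_1] at h1

end Polynomial

end MonIdeal

theorem Stable.isAssociatedPrime_span_X_of_mmax_maximal {K : Type*} [Field K] {I : MonIdeal n}
    (hI : Stable I) (h0 : (0 : Mon) ∉ I.carrier) {m0 : Mon} (hm0 : m0 ∈ minGens I)
    (hmax : ∀ u ∈ minGens I, mmax u ≤ mmax m0) :
    IsAssociatedPrime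
      (Ideal.span (X '' {i : Fin n | (i : ℕ) + 1 ≤ mmax m0} : Set (MvPolynomial (Fin n) K)))
      (MvPolynomial (Fin n) K ⧸ I.toIdeal K) := by
  have hm0ne : m0 ≠ 0 := fun h => h0 (h ▸ hm0.1)
  set A := {i : Fin n | (i : ℕ) + 1 ≤ mmax m0}
  set w := m0 - e (mmax m0)
  have hA : ∀ i ∈ A, ∃ s ∈ finExp n '' I.carrier, s ≤ finExp n w + Finsupp.single i 1 :=
    fun i hi => ⟨_, ⟨_, hI.sub_add_mem hm0.1 hm0ne (Nat.le_add_left 1 i) hi, rfl⟩,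
      by rw [finExp_add, finExp_e]⟩
  have hout : ∀ d : Fin n →₀ ℕ, (∀ i ∈ A, d i = 0) →
      ∀ s ∈ finExp n '' I.carrier, ¬ s ≤ d + finExp n w := by
    rintro d hd _ ⟨m, hm, rfl⟩ hle
    obtain ⟨u, hu, hum⟩ := I.exists_minGens_le hm
    have huv := I.vars_mem u hu.1
    have huw : u ≤ w := (finExp_le_finExp_iff huv).mp fun i => by
      by_cases hui : u (i + 1) = 0
      · simp [hui]
      · simpa [hd i ((le_mmax huv hui).trans (hmax u hu))] using
          ((finExp_le_finExp_iff huv).mpr hum).trans hle i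
    have hwm0 : w < m0 := by
      refine lt_of_le_of_ne tsub_le_self fun h => ?_
      have := congrFun h (mmax m0)
      simp [w, e] at this
      have := mmax_ne_zero (I.vars_mem m0 hm0.1) hm0ne
      omega
    exact I.notMem_of_lt_of_mem_minGens hm0 hwm0
      (I.mem_of_le hu.1 huw (fun i hi => I.vars_mem m0 hm0.1 i (by simp [w] at hi; omega)))
  have hcolon := span_X_image_eq_colon_monomial (R := K) hA hout
  rw [hcolon]
  exact isAssociatedPrime_colon_singleton (hcolon ▸ isPrime_span_X_image _)

/-- Let `I ⊆ S = k[x₁,…,xₙ]` be the ideal spanned by the monomials of a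
stable monomial ideal and `1 ≤ h ≤ n`. If the set of associated primes of `S/I` is exactly
`{(x₁,…,x_h)}`, then `h = max{max(m) : m ∈ G(I)}` and there is a unique `l > 0` with
`x_h^l ∈ G(I)`. -/
theorem statement2 {K : Type*} [Field K] {n : ℕ} (h : ℕ) (h1 : 1 ≤ h) (hn : h ≤ n)
    (I : MonIdeal n) (hI : Stable I)
    (J : Ideal (MvPolynomial (Fin n) K))
    (hJ : J = Ideal.span
      {f | ∃ m ∈ I.carrier, f = ∏ i : Fin n, MvPolynomial.X i ^ m ((i : ℕ) + 1)})
    (hass : associatedPrimes (MvPolynomial (Fin n) K) (MvPolynomial (Fin n) K ⧸ J) =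
      {Ideal.span {f | ∃ i : Fin n, (i : ℕ) + 1 ≤ h ∧ f = MvPolynomial.X i}}) :
    hMax I = h ∧ ∃! l : ℕ, 0 < l ∧ xpw h l ∈ minGens I := by
  obtain ⟨i, rfl⟩ : ∃ i : Fin n, (i : ℕ) + 1 = h := ⟨⟨h - 1, by omega⟩, by simp; omega⟩
  have hP : Ideal.span {f | ∃ j : Fin n, (j : ℕ) + 1 ≤ i + 1 ∧ f = X j} =
      Ideal.span (X '' {j : Fin n | (j : ℕ) + 1 ≤ i + 1} : Set (MvPolynomial (Fin n) K)) := by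
    congr 1
    ext f
    simp [eq_comm]
  rw [hP, hJ.trans (I.span_prod_X_pow_eq_toIdeal K)] at hass
  have h0 : (0 : Mon) ∉ I.carrier := I.zero_notMem_of_toIdeal_ne_top (K := K) fun htop => by
    have := Ideal.Quotient.subsingleton_iff.mpr htop
    exact Set.singleton_ne_empty _ (hass.symm.trans associatedPrimes.eq_empty_of_subsingleton)
  obtain ⟨N, hN⟩ := exists_pow_mem_of_associatedPrimes_eq_singleton hass
    (X_mem_span_X_image_iff.mpr (le_refl ((i : ℕ) + 1)))
  have hxN : xpw (i + 1) N ∈ I.carrier := by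
    rwa [← I.monomial_mem_toIdeal_iff (K := K) (inVars_xpw i N), finExp_xpw,
      ← X_pow_eq_monomial]
  obtain ⟨u, hu, -⟩ := I.exists_minGens_le hxN
  obtain ⟨m0, hm0, hm0max, hmax⟩ := I.exists_minGens_mmax_eq_hMax ⟨u, hu⟩
  have hm0ass : _ ∈ associatedPrimes _ _ :=
    hI.isAssociatedPrime_span_X_of_mmax_maximal (K := K) h0 hm0 (hm0max ▸ hmax)
  rw [hass, Set.mem_singleton_iff] at hm0ass
  have hm0i : mmax m0 = i + 1 :=
    le_antisymm (le_of_span_X_setOf_le (mmax_le (I.vars_mem m0 hm0.1)) hm0ass.le)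
      (le_of_span_X_setOf_le i.isLt hm0ass.ge)
  exact ⟨hm0max ▸ hm0i, I.existsUnique_xpw_mem_minGens h0 hxN⟩

end Paper
end

section
/- Let I be a stable monomial ideal of k[x₁,…,xₙ], set h := max{max(m) : m ∈ G(I)}, and assume x_h^{l_I} ∈ G(I) for some l_I > 0 (the Cohen–Macaulay condition). Then for every m ∈ G(I) and every k ∈ supp(m), there exists an integer l > 0 such that (m/x_k)·x_h^l ∈ G(I). -/
namespace Paper

lemma inVars.mono {n : ℕ} {a b : Mon} (hb : inVars n b) (hab : a ≤ b) : inVars n a :=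
  fun i hi => hb i fun h => hi (Nat.eq_zero_of_le_zero (h ▸ hab i))

lemma MonIdeal.mem_of_le_s3 {n : ℕ} (I : MonIdeal n) {a b : Mon} (ha : a ∈ I.carrier)
    (hb : inVars n b) (hab : a ≤ b) : b ∈ I.carrier := by
  have hsum : a + (b - a) = b := by
    funext i
    exact Nat.add_sub_cancel' (hab i)
  exact hsum ▸ I.mul_mem a ha (b - a) (hb.mono fun i => Nat.sub_le _ _)

lemma le_mmax_of_inVars {n : ℕ} {m : Mon} (hm : inVars n m) {i : ℕ} (hi : m i ≠ 0) :
    i ≤ mmax m :=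
  le_csSup ⟨n, fun j hj => (hm j hj).2⟩ hi

lemma mmax_eq_of_isGreatest {m : Mon} {h : ℕ} (hmh : m h ≠ 0) (hle : ∀ i, m i ≠ 0 → i ≤ h) :
    mmax m = h :=
  IsGreatest.csSup_eq ⟨hmh, hle⟩

lemma mmax_le_hMax {n : ℕ} {I : MonIdeal n} {m : Mon} (hm : m ∈ minGens I) :
    mmax m ≤ hMax I := by
  refine le_csSup ⟨n, ?_⟩ ⟨m, hm, rfl⟩
  rintro _ ⟨m', hm', rfl⟩
  exact csSup_le' fun i hi => (I.vars_mem m' hm'.1 i hi).2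

lemma le_hMax_of_mem_minGens {n : ℕ} {I : MonIdeal n} {m : Mon} (hm : m ∈ minGens I)
    {i : ℕ} (hi : m i ≠ 0) : i ≤ hMax I :=
  (le_mmax_of_inVars (I.vars_mem m hm.1) hi).trans (mmax_le_hMax hm)

lemma sub_e_not_mem_of_mem_minGens {n : ℕ} {I : MonIdeal n} {m : Mon} (hm : m ∈ minGens I)
    {k : ℕ} (hk : m k ≠ 0) : m - e k ∉ I.carrier := by
  intro hmem
  have hk' := congrFun (hm.2 _ hmem fun i => Nat.sub_le _ _) k
  simp [e] at hk'
  omega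

lemma mem_minGens_of_forall_sub_e_not_mem {n : ℕ} {I : MonIdeal n} {w : Mon}
    (hw : w ∈ I.carrier) (hdrop : ∀ j, w j ≠ 0 → w - e j ∉ I.carrier) : w ∈ minGens I := by
  refine ⟨hw, fun m hm hmw => ?_⟩
  by_contra hne
  obtain ⟨j, hj⟩ : ∃ j, m j < w j := by
    by_contra! hge
    exact hne (le_antisymm hmw hge)
  refine hdrop j (by omega) (I.mem_of_le_s3 hm ((I.vars_mem w hw).mono fun i => Nat.sub_le _ _)
    fun i => ?_)
  have := hmw i
  simp only [Pi.sub_apply, e]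
  split_ifs with hij
  · subst hij; omega
  · omega

lemma Stable.sub_e_max_mem {n : ℕ} {I : MonIdeal n} (hI : Stable I) {w : Mon} {h j : ℕ}
    (hle : ∀ i, w i ≠ 0 → i ≤ h) (hwh : w h ≠ 0) (hwj : w j ≠ 0) (hj : 1 ≤ j) (hjh : j < h)
    (hmem : w - e j ∈ I.carrier) : w - e h ∈ I.carrier := by
  have hmax : mmax (w - e j) = h := by
    refine mmax_eq_of_isGreatest ?_ fun i hi => hle i fun hw => hi (by simp [hw])
    simpa [e, hjh.ne'] using hwh
  have hswap := hI _ hmem j hj (hmax.symm ▸ hjh)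
  rw [hmax] at hswap
  convert hswap using 1
  funext i
  simp only [Pi.add_apply, Pi.sub_apply, e]
  split_ifs <;> subst_vars <;> omega

lemma add_xpw_succ_sub_e (m : Mon) (h l : ℕ) : m + xpw h (l + 1) - e h = m + xpw h l := by
  funext i
  simp only [Pi.add_apply, Pi.sub_apply, xpw, e]
  split_ifs <;> omega

/-- Take `l` least with `m·x_h^l ∈ I`: removing `x_h` leaves `I` by the choice of `l`, and by
stability so does removing any other variable. -/
lemma Stable.exists_add_xpw_mem_minGens {n : ℕ} {I : MonIdeal n} (hI : Stable I) {m : Mon}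
    {h : ℕ} (hle : ∀ i, m i ≠ 0 → i ≤ h) (hm : m ∉ I.carrier)
    (hex : ∃ t, m + xpw h t ∈ I.carrier) :
    ∃ l, 0 < l ∧ m + xpw h l ∈ minGens I := by
  classical
  have hzero : m + xpw h 0 = m := by
    funext i
    simp [xpw]
  obtain ⟨l, hl⟩ : ∃ l, Nat.find hex = l + 1 :=
    Nat.exists_eq_succ_of_ne_zero fun h0 => hm (hzero ▸ h0 ▸ Nat.find_spec hex)
  have hmem : m + xpw h (l + 1) ∈ I.carrier := hl ▸ Nat.find_spec hex
  have hdrop_h : m + xpw h (l + 1) - e h ∉ I.carrier := by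
    rw [add_xpw_succ_sub_e]
    exact fun hmem' => by have := Nat.find_min' hex hmem'; omega
  refine ⟨l + 1, l.succ_pos, mem_minGens_of_forall_sub_e_not_mem hmem fun j hj hmem' => ?_⟩
  by_cases hjh : j = h
  · exact hdrop_h (hjh ▸ hmem')
  have hmj : m j ≠ 0 := by simpa [xpw, hjh] using hj
  refine hdrop_h (hI.sub_e_max_mem (j := j) (fun i hi => ?_) (by simp [xpw]) hj
    ((I.vars_mem _ hmem) j hj).1 (lt_of_le_of_ne (hle j hmj) hjh) hmem')
  by_cases hih : i = h
  · exact hih.le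
  · exact hle i (by simpa [xpw, hih] using hi)

theorem statement3_general {n : ℕ} (I : MonIdeal n) (hI : Stable I)
    (h : ℕ) (hh : hMax I = h)
    (lI : ℕ) (hCM : xpw h lI ∈ minGens I) :
    ∀ m ∈ minGens I, ∀ k, m k ≠ 0 →
      ∃ l : ℕ, 0 < l ∧ (m - e k) + xpw h l ∈ minGens I := by
  subst hh
  intro m hm k hk
  have hsub_le : m - e k ≤ m := fun i => Nat.sub_le _ _
  refine hI.exists_add_xpw_mem_minGens (fun i hi => le_hMax_of_mem_minGens hm ?_)
    (sub_e_not_mem_of_mem_minGens hm hk) ⟨lI, ?_⟩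
  · exact fun hmi => hi (Nat.eq_zero_of_le_zero (hmi ▸ hsub_le i))
  · rw [add_comm]
    exact I.mul_mem _ hCM.1 _ ((I.vars_mem m hm.1).mono hsub_le)

/-- Let `I` be a stable monomial ideal, `h = max{max(m) : m ∈ G(I)}`, and
suppose `x_h^{l_I} ∈ G(I)` for some `l_I > 0` (the Cohen–Macaulay condition). Then for every
`m ∈ G(I)` and every `k ∈ supp(m)` there is `l > 0` with `(m/x_k)·x_h^l ∈ G(I)`. -/
theorem statement3 {n : ℕ} (I : MonIdeal n) (hI : Stable I)
    (h : ℕ) (hh : hMax I = h)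
    (lI : ℕ) (hlI : 0 < lI) (hCM : xpw h lI ∈ minGens I) :
    ∀ m ∈ minGens I, ∀ k, m k ≠ 0 →
      ∃ l : ℕ, 0 < l ∧ (m - e k) + xpw h l ∈ minGens I :=
  statement3_general I hI h hh lI hCM

end Paper
end

section
/- Let I be a Borel fixed ideal of k[x₁,…,xₙ] and Ĩ = bpol(I) its polarization. Let c : c₀ ⋖* c₁ ⋖* ⋯ ⋖* c_q be an unrefinable chain in Γ_P̃^* with q ≥ 2 and label sequence λ(c) = (λ₁,…,λ_q). If 2 ≤ r ≤ q and λ_r < 0, then there exists an unrefinable chain c′ from c₀ to c_q in Γ_P̃^* whose label sequence is obtained from λ(c) by interchanging λ_{r−1} and λ_r. Consequently, a negative entry of λ(c) can be shifted to any earlier position by a chain in the same interval. -/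
/-!
A step of `Γ_P̃^*` with negative label `-a` deletes `(a, j)` from `F̃` and keeps the monomial;
every step deletes one element `b` of `F̃`, and its new monomial (`m` or `g (f_b(m))`) depends
only on `m` and `b`. So `(F, m) ⋖* (F ∖ b, m') ⋖* (F ∖ {a, b}, m')` can be replaced by
`(F, m) ⋖* (F ∖ a, m) ⋖* (F ∖ {a, b}, m')` with the two labels interchanged, since erasing elements of
`F̃` preserves admissibility. Repeating such adjacent swaps moves a negative label to any earlier position.
-/

namespace Paper

/-- `psum m i = Σ_{l=1}^{i} deg_l(m)`. -/
def psum (m : Mon) (i : ℕ) : ℕ := ∑ l ∈ Finset.Icc 1 i, m l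

/-- The polarization `bpol(m)` of a monomial `m`, as a (squarefree) monomial in the
variables `x_{i,j}`: for `m = x_{α₁}⋯x_{α_e}` with `α₁ ≤ ⋯ ≤ α_e`,
`bpol(m) = ∏_t x_{α_t,t}`. -/
def bpol (m : Mon) : ℕ × ℕ → ℕ :=
  fun p => if psum m (p.1 - 1) < p.2 ∧ p.2 ≤ psum m p.1 then 1 else 0

/-- The smallest `k > s` with `k ∈ supp(m)`. -/
noncomputable def nextv (m : Mon) (s : ℕ) : ℕ := sInf {k | s < k ∧ m k ≠ 0}

/-- `f_s(m) = (m/x_s)·x_k` where `k = min{k > s : k ∈ supp(m)}`. -/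
noncomputable def fsop (m : Mon) (s : ℕ) : Mon := (m - e s) + e (nextv m s)

/-- Pairs `(F̃, m)` (with `m̃ = bpol m`) underlying the modified Eliahou–Kervaire
resolution of `bpol(I)`. -/
abbrev APT : Type := Finset (ℕ × ℕ) × Mon

/-- `(F̃, bpol m)` is an admissible pair for `bpol(I)`:
`F̃ = {(i₁,j₁),…,(i_q,j_q)}` with `i₁ < ⋯ < i_q < max(m)` and `j_r = 1 + Σ_{l ≤ i_r} deg_l(m)`. -/
def AdmT {n : ℕ} (I : MonIdeal n) (p : APT) : Prop :=
  p.2 ∈ minGens I ∧ ∀ a ∈ p.1, 1 ≤ a.1 ∧ a.1 < mmax p.2 ∧ a.2 = 1 + psum p.2 a.1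

/-- The covering relation of the poset `Γ_P̃` (with `none` playing the role of `0̂`):
`coversT I g x y` means `x ⋗ y`. -/
def coversT {n : ℕ} (I : MonIdeal n) (g : Mon → Mon) (x y : Option APT) : Prop :=
  match x, y with
  | some p, some q => AdmT I p ∧ AdmT I q ∧ ∃ a ∈ p.1,
      q = (p.1.erase a, p.2) ∨ q = (p.1.erase a, g (fsop p.2 a.1))
  | some p, none => AdmT I p ∧ p.1 = (∅ : Finset (ℕ × ℕ))
  | _, _ => False

/-- The strict order of `Γ_P̃`. -/
def ltGT {n : ℕ} (I : MonIdeal n) (g : Mon → Mon) (x y : Option APT) : Prop :=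
  Relation.TransGen (fun a b => coversT I g b a) x y

/-- The order of `Γ_P̃`. -/
def leGT {n : ℕ} (I : MonIdeal n) (g : Mon → Mon) (x y : Option APT) : Prop :=
  x = y ∨ ltGT I g x y

/-- The interval `[0̂, σ]` in `Γ_P̃`. -/
def belowT {n : ℕ} (I : MonIdeal n) (g : Mon → Mon) (σ : Option APT) : Set (Option APT) :=
  {x | leGT I g x σ}

/-- `lstepT I g x y l` : `x ⋖* y` in the dual poset `Γ_P̃^*` (i.e. `x ⋗ y` in `Γ_P̃`) and
the edge label `λ(x ⋖* y)` is `l`. -/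
def lstepT {n : ℕ} (I : MonIdeal n) (g : Mon → Mon) (x y : Option APT) (l : ℤ) : Prop :=
  match x, y with
  | some p, some q => AdmT I p ∧ AdmT I q ∧ ∃ a ∈ p.1,
      (q = (p.1.erase a, p.2) ∧ l = -(a.1 : ℤ)) ∨
      (q = (p.1.erase a, g (fsop p.2 a.1)) ∧ l = (a.1 : ℤ))
  | some p, none => AdmT I p ∧ p.1 = (∅ : Finset (ℕ × ℕ)) ∧ l = 0
  | _, _ => False

/-- The set `F̃` of the full admissible pair `(F̃, bpol m)` of `m` (for `max(m) = h`). -/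
def fullF (h : ℕ) (m : Mon) : Finset (ℕ × ℕ) :=
  (Finset.Icc 1 (h - 1)).image (fun i => (i, 1 + psum m i))

lemma AdmT.erase {n : ℕ} {I : MonIdeal n} {p : APT} (h : AdmT I p) (a : ℕ × ℕ) :
    AdmT I (p.1.erase a, p.2) :=
  ⟨h.1, fun b hb => h.2 b (Finset.mem_of_mem_erase hb)⟩

section Steps

variable {n : ℕ} {I : MonIdeal n} {g : Mon → Mon}

lemma lstepT_erase {p : APT} (hp : AdmT I p) {a : ℕ × ℕ} (ha : a ∈ p.1) :
    lstepT I g (some p) (some (p.1.erase a, p.2)) (-(a.1 : ℤ)) :=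
  ⟨hp, hp.erase a, a, ha, Or.inl ⟨rfl, rfl⟩⟩

lemma lstepT.eq_erase_of_neg {x y : Option APT} {l : ℤ} (h : lstepT I g x y l) (hl : l < 0) :
    ∃ p a, x = some p ∧ a ∈ p.1 ∧ y = some (p.1.erase a, p.2) ∧ l = -(a.1 : ℤ) := by
  rcases x with _ | p <;> rcases y with _ | p'
  · exact h.elim
  · exact h.elim
  · exact absurd h.2.2 hl.ne
  · obtain ⟨-, -, a, ha, ⟨rfl, rfl⟩ | ⟨-, rfl⟩⟩ := h
    · exact ⟨p, a, rfl, ha, rfl, rfl⟩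
    · exact absurd hl (by omega)

lemma lstepT.admT_left {p : APT} {y : Option APT} {l : ℤ} (h : lstepT I g (some p) y l) :
    AdmT I p := by
  rcases y with _ | p'
  exacts [h.1, h.1]

lemma lstepT.erase_erase {p p' : APT} {l : ℤ} (h : lstepT I g (some p) (some p') l)
    {a : ℕ × ℕ} (ha : a ∈ p'.1) :
    lstepT I g (some (p.1.erase a, p.2)) (some (p'.1.erase a, p'.2)) l := by
  obtain ⟨hp, hp', b, hb, hstep⟩ := h
  have hab : a ≠ b ∧ a ∈ p.1 := by
    rcases hstep with ⟨rfl, -⟩ | ⟨rfl, -⟩ <;> exact Finset.mem_erase.1 ha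
  refine ⟨hp.erase a, hp'.erase a, b, Finset.mem_erase.2 ⟨hab.1.symm, hb⟩, ?_⟩
  rcases hstep with ⟨rfl, hl⟩ | ⟨rfl, hl⟩
  · exact Or.inl ⟨by simp [Finset.erase_right_comm], hl⟩
  · exact Or.inr ⟨by simp [Finset.erase_right_comm], hl⟩

lemma lstepT.mem_of_mem {p p' : APT} {l : ℤ} (h : lstepT I g (some p) (some p') l)
    {a : ℕ × ℕ} (ha : a ∈ p'.1) : a ∈ p.1 := by
  obtain ⟨-, -, b, -, ⟨rfl, -⟩ | ⟨rfl, -⟩⟩ := h <;> exact Finset.mem_of_mem_erase ha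

theorem lstepT_swap_of_neg {x y z : Option APT} {l₁ l₂ : ℤ}
    (h₁ : lstepT I g x y l₁) (h₂ : lstepT I g y z l₂) (hl₂ : l₂ < 0) :
    ∃ y', lstepT I g x y' l₂ ∧ lstepT I g y' z l₁ := by
  obtain ⟨p', a, rfl, ha, rfl, rfl⟩ := h₂.eq_erase_of_neg hl₂
  rcases x with _ | p
  · exact h₁.elim
  exact ⟨_, lstepT_erase h₁.admT_left (h₁.mem_of_mem ha), h₁.erase_erase ha⟩

end Steps

/-- `c 0 ⋖* c 1 ⋖* ⋯ ⋖* c q` in `Γ_P̃^*`, the step ending at `c t` carrying the label `lab t`. -/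
def IsLabeledChain {n : ℕ} (I : MonIdeal n) (g : Mon → Mon) (q : ℕ) (c : ℕ → Option APT)
    (lab : ℕ → ℤ) : Prop :=
  ∀ t, t < q → lstepT I g (c t) (c (t + 1)) (lab (t + 1))

/-- The labels `lab` with the entry at position `r` moved to position `s ≤ r`. -/
def moveLabel (lab : ℕ → ℤ) (s r t : ℕ) : ℤ :=
  if t < s then lab t else if t = s then lab r else if t ≤ r then lab (t - 1) else lab t

lemma moveLabel_self (lab : ℕ → ℤ) (r : ℕ) : moveLabel lab r r = lab := by
  funext t
  unfold moveLabel
  split_ifs <;> first | rfl | (subst_vars; rfl) | omega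

lemma moveLabel_comp_swap (lab : ℕ → ℤ) {s r : ℕ} (h : s < r) :
    moveLabel lab (s + 1) r ∘ Equiv.swap s (s + 1) = moveLabel lab s r := by
  funext t
  simp only [Function.comp_apply, Equiv.swap_apply_def, moveLabel]
  split_ifs <;> first | rfl | (subst_vars; rfl) | omega

namespace IsLabeledChain

variable {n : ℕ} {I : MonIdeal n} {g : Mon → Mon} {q : ℕ} {c : ℕ → Option APT} {lab : ℕ → ℤ}

theorem exists_swap (hc : IsLabeledChain I g q c lab) {j : ℕ} (hj : 1 ≤ j) (hjq : j + 1 ≤ q)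
    (hneg : lab (j + 1) < 0) :
    ∃ c', c' 0 = c 0 ∧ c' q = c q ∧
      IsLabeledChain I g q c' (lab ∘ Equiv.swap j (j + 1)) := by
  obtain ⟨i, rfl⟩ : ∃ i, j = i + 1 := ⟨j - 1, by omega⟩
  obtain ⟨y', hy₁, hy₂⟩ := lstepT_swap_of_neg (hc i (by omega)) (hc (i + 1) hjq) hneg
  refine ⟨Function.update c (i + 1) y', Function.update_of_ne (by omega) _ _,
    Function.update_of_ne (by omega) _ _, fun t ht => ?_⟩
  by_cases hti : t = i
  · subst hti
    simpa [Function.update_of_ne] using hy₁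
  by_cases hti' : t = i + 1
  · subst hti'
    simpa [Function.update_of_ne] using hy₂
  · rw [Function.comp_apply, Equiv.swap_apply_of_ne_of_ne (by omega) (by omega),
      Function.update_of_ne (by omega), Function.update_of_ne (by omega)]
    exact hc t ht

theorem exists_moveLabel (hc : IsLabeledChain I g q c lab) {r : ℕ} (hrq : r ≤ q)
    (hneg : lab r < 0) {s : ℕ} (hs : 1 ≤ s) (hsr : s ≤ r) :
    ∃ c', c' 0 = c 0 ∧ c' q = c q ∧ IsLabeledChain I g q c' (moveLabel lab s r) := by
  induction hsr using Nat.decreasingInduction with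
  | self => exact ⟨c, rfl, rfl, by rwa [moveLabel_self]⟩
  | of_succ s hs' ih =>
    obtain ⟨c', h0, hq, hc'⟩ := ih (by omega)
    have hneg' : moveLabel lab (s + 1) r (s + 1) < 0 := by simpa [moveLabel] using hneg
    obtain ⟨c'', h0', hq', hc''⟩ := hc'.exists_swap hs (by omega) hneg'
    exact ⟨c'', h0'.trans h0, hq'.trans hq, moveLabel_comp_swap lab hs' ▸ hc''⟩

end IsLabeledChain

theorem statement10_general {n : ℕ} (I : MonIdeal n)
    (g : Mon → Mon)
    (q : ℕ) (c : ℕ → Option APT) (lab : ℕ → ℤ)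
    (hchain : ∀ t, t < q → lstepT I g (c t) (c (t + 1)) (lab (t + 1)))
    (r : ℕ) (hr1 : 2 ≤ r) (hr2 : r ≤ q) (hneg : lab r < 0) :
    (∃ (c' : ℕ → Option APT) (lab' : ℕ → ℤ),
      c' 0 = c 0 ∧ c' q = c q ∧
      (∀ t, t < q → lstepT I g (c' t) (c' (t + 1)) (lab' (t + 1))) ∧
      (∀ t, 1 ≤ t → t ≤ q →
        lab' t = if t = r - 1 then lab r else if t = r then lab (r - 1) else lab t)) ∧
    (∀ s, 1 ≤ s → s < r →
      ∃ (c' : ℕ → Option APT) (lab' : ℕ → ℤ),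
        c' 0 = c 0 ∧ c' q = c q ∧
        (∀ t, t < q → lstepT I g (c' t) (c' (t + 1)) (lab' (t + 1))) ∧
        (∀ t, 1 ≤ t → t ≤ q →
          lab' t = if t < s then lab t else if t = s then lab r
            else if t ≤ r then lab (t - 1) else lab t)) := by
  have hchain : IsLabeledChain I g q c lab := hchain
  have hr : r - 1 + 1 = r := by omega
  refine ⟨?_, fun s hs hsr => ?_⟩
  · obtain ⟨c', h0, hq, hc'⟩ :=
      hchain.exists_swap (j := r - 1) (by omega) (by omega) (hr ▸ hneg)
    refine ⟨c', _, h0, hq, hc', fun t _ _ => ?_⟩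
    rw [hr, Function.comp_apply, Equiv.swap_apply_def]
    split_ifs <;> rfl
  · obtain ⟨c', h0, hq, hc'⟩ := hchain.exists_moveLabel hr2 hneg hs hsr.le
    exact ⟨c', _, h0, hq, hc', fun t _ _ => rfl⟩

/-- Let `I` be a Borel fixed ideal with decomposition function `g`, and
`c : c₀ ⋖* ⋯ ⋖* c_q` an unrefinable chain in `Γ_P̃^*` with `q ≥ 2` and labels
`λ₁,…,λ_q`. If `2 ≤ r ≤ q` and `λ_r < 0`, then the contiguous labels `λ_{r−1}, λ_r` can be
interchanged by another unrefinable chain from `c₀` to `c_q`; consequently a negative entry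
can be shifted to any earlier position. -/
theorem statement10 {n : ℕ} (I : MonIdeal n) (hI : Borel I)
    (g : Mon → Mon) (hg : IsDecompFn I g)
    (q : ℕ) (hq : 2 ≤ q) (c : ℕ → Option APT) (lab : ℕ → ℤ)
    (hchain : ∀ t, t < q → lstepT I g (c t) (c (t + 1)) (lab (t + 1)))
    (r : ℕ) (hr1 : 2 ≤ r) (hr2 : r ≤ q) (hneg : lab r < 0) :
    (∃ (c' : ℕ → Option APT) (lab' : ℕ → ℤ),
      c' 0 = c 0 ∧ c' q = c q ∧
      (∀ t, t < q → lstepT I g (c' t) (c' (t + 1)) (lab' (t + 1))) ∧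
      (∀ t, 1 ≤ t → t ≤ q →
        lab' t = if t = r - 1 then lab r else if t = r then lab (r - 1) else lab t)) ∧
    (∀ s, 1 ≤ s → s < r →
      ∃ (c' : ℕ → Option APT) (lab' : ℕ → ℤ),
        c' 0 = c 0 ∧ c' q = c q ∧
        (∀ t, t < q → lstepT I g (c' t) (c' (t + 1)) (lab' (t + 1))) ∧
        (∀ t, 1 ≤ t → t ≤ q →
          lab' t = if t < s then lab t else if t = s then lab r
            else if t ≤ r then lab (t - 1) else lab t)) :=
  statement10_general I g q c lab hchain r hr1 hr2 hneg

end Paper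
end
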